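/- arXiv:2302.12196 — 6 statements merged into one kernel-verified Lean document; each statement's English description precedes it below -/
import Mathlib

section
/- Fix a real number q ≥ 1. Then the overall normalized ℓq calibration error is at most the weighted average of the group errors: E^{(q)} / T ≤ Σ_{j : T^j > 0} (T^j / T) · (E_j^{(q)} / T^j). Consequently, if for each group j with T^j > 0 one has E_j^{(q)} / T^j ≤ R_j + ε with R_j ≥ 0, ε ≥ 0, then E^{(q)} / T ≤ Σ_{j : T^j > 0} (T^j / T) · R_j + ε. -/
open Finset
open scoped Classical

/-- Number of times `i/N` was predicted among the time steps in `S`. -/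
noncomputable def numPred (T N : ℕ) (p : Fin T → ℝ) (S : Finset (Fin T)) (i : ℕ) : ℕ :=
  (S.filter (fun t => p t = (i : ℝ) / N)).card

/-- Empirical frequency `ρ(i)` of positive outcomes among the time steps in `S` where
`i/N` was predicted (defined to be `i/N` when there are no such time steps). -/
noncomputable def empFreq (T N : ℕ) (p o : Fin T → ℝ) (S : Finset (Fin T)) (i : ℕ) : ℝ :=
  if 0 < numPred T N p S i then
    (∑ t ∈ S.filter (fun t => p t = (i : ℝ) / N), o t) / (numPred T N p S i : ℝ)
  else (i : ℝ) / N

/-- Unnormalized ℓq calibration error over the time steps in `S`: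
`E^{(q)} = Σ_{i=0}^N T_i · |ρ(i) − i/N|^q`. -/
noncomputable def calErrLq (T N : ℕ) (q : ℝ) (p o : Fin T → ℝ) (S : Finset (Fin T)) : ℝ :=
  ∑ i ∈ Finset.range (N + 1),
    (numPred T N p S i : ℝ) * |empFreq T N p o S i - (i : ℝ) / N| ^ q

/-!
In every bin `i`, the overall deviation `ρ(i) - i/N` is the average of the group deviations
`ρʲ(i) - i/N` weighted by the bin counts `T_iʲ`, so Jensen's inequality for the convex function
`|x|^q` gives `T_i |ρ(i) - i/N|^q ≤ ∑ⱼ T_iʲ |ρʲ(i) - i/N|^q`. Summing over the bins gives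
`E ≤ ∑ⱼ Eⱼ`, which is the first claim after dividing by `T`; the second follows because the
group weights `Tʲ/T` add up to at most `1`.
-/

theorem Real.sum_mul_abs_weightedMean_rpow_le {ι : Type*} (s : Finset ι) {n x : ι → ℝ}
    (hn : ∀ j ∈ s, 0 ≤ n j) {q : ℝ} (hq : 1 ≤ q) :
    (∑ j ∈ s, n j) * |(∑ j ∈ s, n j * x j) / ∑ j ∈ s, n j| ^ q
      ≤ ∑ j ∈ s, n j * |x j| ^ q := by
  set W := ∑ j ∈ s, n j
  rcases (sum_nonneg hn : 0 ≤ W).eq_or_lt with hW | hW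
  · rw [show W = 0 from hW.symm, zero_mul]
    exact sum_nonneg fun j hj => mul_nonneg (hn j hj) (by positivity)
  have hw : ∀ j ∈ s, 0 ≤ n j / W := fun j hj => div_nonneg (hn j hj) hW.le
  have hw1 : ∑ j ∈ s, n j / W = 1 := by rw [← sum_div, div_self hW.ne']
  have habs : |(∑ j ∈ s, n j * x j) / W| ≤ ∑ j ∈ s, n j / W * |x j| := by
    rw [sum_div]
    refine (abs_sum_le_sum_abs _ _).trans (le_of_eq (sum_congr rfl fun j hj => ?_))
    rw [abs_div, abs_mul, abs_of_nonneg (hn j hj), abs_of_pos hW]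
    ring
  have hjensen := Real.rpow_arith_mean_le_arith_mean_rpow s _ (fun j => |x j|) hw hw1
    (fun j _ => abs_nonneg (x j)) hq
  calc W * |(∑ j ∈ s, n j * x j) / W| ^ q
      ≤ W * ∑ j ∈ s, n j / W * |x j| ^ q := by
        gcongr
        exact (Real.rpow_le_rpow (abs_nonneg _) habs (by linarith)).trans hjensen
    _ = ∑ j ∈ s, n j * |x j| ^ q := by
        rw [mul_sum]
        have : W ≠ 0 := hW.ne'
        exact sum_congr rfl fun j _ => by field_simp

theorem Finset.card_mul_abs_mean_rpow_le_sum_fiberwise {α ι : Type*} [DecidableEq ι]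
    (u : Finset α) (t : Finset ι) {g : α → ι} (hg : ∀ a ∈ u, g a ∈ t) (f : α → ℝ)
    {q : ℝ} (hq : 1 ≤ q) :
    (#u : ℝ) * |(∑ a ∈ u, f a) / #u| ^ q
      ≤ ∑ j ∈ t, (#{a ∈ u | g a = j} : ℝ) *
          |(∑ a ∈ u with g a = j, f a) / #{a ∈ u | g a = j}| ^ q := by
  have hcard : ∑ j ∈ t, (#{a ∈ u | g a = j} : ℝ) = #u := by
    exact_mod_cast (card_eq_sum_card_fiberwise hg).symm
  have hsum : ∑ j ∈ t, (#{a ∈ u | g a = j} : ℝ) *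
      ((∑ a ∈ u with g a = j, f a) / #{a ∈ u | g a = j}) = ∑ a ∈ u, f a := by
    simp only [← expect_eq_sum_div_card, card_mul_expect]
    exact sum_fiberwise_of_maps_to hg f
  have := Real.sum_mul_abs_weightedMean_rpow_le t (n := fun j => (#{a ∈ u | g a = j} : ℝ))
    (x := fun j => (∑ a ∈ u with g a = j, f a) / #{a ∈ u | g a = j})
    (fun j _ => Nat.cast_nonneg _) hq
  rwa [hcard, hsum] at this

-- Also for an empty bin, where the right-hand side is `0` as a division by `0`.
theorem empFreq_sub_eq_sum_div_numPred (T N : ℕ) (p o : Fin T → ℝ) (S : Finset (Fin T))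
    (i : ℕ) :
    empFreq T N p o S i - i / N
      = (∑ t ∈ S with p t = i / N, (o t - i / N)) / numPred T N p S i := by
  unfold empFreq
  split_ifs with h
  · have : (numPred T N p S i : ℝ) ≠ 0 := by exact_mod_cast h.ne'
    rw [sum_sub_distrib, sum_const, nsmul_eq_mul, ← numPred]
    field_simp
  · simp [Nat.eq_zero_of_not_pos h]

theorem calErrLq_le_sum_fiberwise {T : ℕ} (N : ℕ) {q : ℝ} (hq : 1 ≤ q) (p o : Fin T → ℝ)
    (S : Finset (Fin T)) {ι : Type*} [Fintype ι] [DecidableEq ι] (J : Fin T → ι) :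
    calErrLq T N q p o S ≤ ∑ j, calErrLq T N q p o {t ∈ S | J t = j} := by
  unfold calErrLq
  rw [sum_comm]
  gcongr with i
  simp only [empFreq_sub_eq_sum_div_numPred, numPred]
  refine (card_mul_abs_mean_rpow_le_sum_fiberwise _ univ (fun t _ => mem_univ (J t)) _ hq
    ).trans_eq (sum_congr rfl fun j _ => by rw [filter_comm])

theorem calErrLq_empty (T N : ℕ) (q : ℝ) (p o : Fin T → ℝ) : calErrLq T N q p o ∅ = 0 := by
  simp [calErrLq, numPred]

theorem Finset.sum_filter_pos_div_mul_div {ι : Type*} (s : Finset ι) (n : ι → ℕ) {a : ι → ℝ}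
    (ha : ∀ j ∈ s, n j = 0 → a j = 0) (T : ℝ) :
    ∑ j ∈ s with 0 < n j, (n j : ℝ) / T * (a j / n j) = (∑ j ∈ s, a j) / T := by
  rw [sum_filter, sum_div]
  refine sum_congr rfl fun j hj => ?_
  split_ifs with h
  · have : (n j : ℝ) ≠ 0 := by exact_mod_cast h.ne'
    field_simp
  · simp [ha j hj (Nat.eq_zero_of_not_pos h)]

theorem Finset.sum_mul_le_sum_mul_add_of_sum_le_one {ι : Type*} (s : Finset ι) {w x R : ι → ℝ}
    {ε : ℝ} (hw : ∀ j ∈ s, 0 ≤ w j) (hw1 : ∑ j ∈ s, w j ≤ 1) (hε : 0 ≤ ε)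
    (hx : ∀ j ∈ s, x j ≤ R j + ε) :
    ∑ j ∈ s, w j * x j ≤ ∑ j ∈ s, w j * R j + ε :=
  calc ∑ j ∈ s, w j * x j ≤ ∑ j ∈ s, w j * (R j + ε) :=
        sum_le_sum fun j hj => mul_le_mul_of_nonneg_left (hx j hj) (hw j hj)
    _ = ∑ j ∈ s, w j * R j + (∑ j ∈ s, w j) * ε := by
        rw [sum_mul, ← sum_add_distrib]
        exact sum_congr rfl fun j _ => by ring
    _ ≤ ∑ j ∈ s, w j * R j + ε := by
        gcongr
        exact mul_le_of_le_one_left hε hw1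

theorem sum_card_fiber_div_le_one {T : ℕ} {ι : Type*} [Fintype ι] [DecidableEq ι]
    (J : Fin T → ι) (F : Finset ι) :
    ∑ j ∈ F, (#{t | J t = j} : ℝ) / T ≤ 1 := by
  rw [← sum_div]
  refine div_le_one_of_le₀ ?_ (Nat.cast_nonneg T)
  have hcover : ∑ j, #{t | J t = j} = T := by
    simpa using (card_eq_sum_card_fiberwise (fun t _ => mem_univ (J t)) (s := univ)).symm
  calc ∑ j ∈ F, (#{t | J t = j} : ℝ) ≤ ∑ j, (#{t | J t = j} : ℝ) :=
        sum_le_sum_of_subset_of_nonneg (subset_univ F) fun _ _ _ => Nat.cast_nonneg _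
    _ = T := by exact_mod_cast hcover

theorem calErrLq_le_weighted_group_errors_general
    (T N M : ℕ)
    (q : ℝ) (hq : 1 ≤ q)
    (p o : Fin T → ℝ)
    (J : Fin T → Fin M) :
    (calErrLq T N q p o univ) / (T : ℝ)
      ≤ ∑ j ∈ univ.filter
            (fun j : Fin M => 0 < (univ.filter (fun t => J t = j)).card),
          ((univ.filter (fun t => J t = j)).card : ℝ) / (T : ℝ) *
            (calErrLq T N q p o (univ.filter (fun t => J t = j)) /
              ((univ.filter (fun t => J t = j)).card : ℝ)) ∧
    ∀ (R : Fin M → ℝ) (ε : ℝ), (∀ j, 0 ≤ R j) → 0 ≤ ε →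
      (∀ j : Fin M, 0 < (univ.filter (fun t => J t = j)).card →
        calErrLq T N q p o (univ.filter (fun t => J t = j)) /
          ((univ.filter (fun t => J t = j)).card : ℝ) ≤ R j + ε) →
      (calErrLq T N q p o univ) / (T : ℝ)
        ≤ (∑ j ∈ univ.filter
              (fun j : Fin M => 0 < (univ.filter (fun t => J t = j)).card),
            ((univ.filter (fun t => J t = j)).card : ℝ) / (T : ℝ) * R j) + ε := by
  have hgroups := sum_filter_pos_div_mul_div univ (fun j => #{t | J t = j})
    (a := fun j => calErrLq T N q p o {t | J t = j})
    (fun j _ h => by simp only [card_eq_zero.mp h, calErrLq_empty]) T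
  have hweighted : calErrLq T N q p o univ / T ≤ ∑ j ∈ univ with 0 < #{t | J t = j},
      (#{t | J t = j} : ℝ) / T * (calErrLq T N q p o {t | J t = j} / #{t | J t = j}) := by
    rw [hgroups]
    exact div_le_div_of_nonneg_right (calErrLq_le_sum_fiberwise N hq p o univ J)
      (Nat.cast_nonneg T)
  refine ⟨hweighted, fun R ε _ hε hR => hweighted.trans ?_⟩
  exact sum_mul_le_sum_mul_add_of_sum_le_one _ (fun j _ => by positivity)
    (sum_card_fiber_div_le_one J _) hε fun j hj => hR j (mem_filter.mp hj).2

/-- appendix ℓp version of Lemma 1, via Jensen's inequality. -/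
theorem calErrLq_le_weighted_group_errors
    (T N M : ℕ) (hT : 1 ≤ T) (hN : 1 ≤ N) (hM : 1 ≤ M)
    (q : ℝ) (hq : 1 ≤ q)
    (p o : Fin T → ℝ)
    (hp : ∀ t, ∃ i : Fin (N + 1), p t = (i : ℝ) / N)
    (ho : ∀ t, o t = 0 ∨ o t = 1)
    (J : Fin T → Fin M) :
    (calErrLq T N q p o univ) / (T : ℝ)
      ≤ ∑ j ∈ univ.filter
            (fun j : Fin M => 0 < (univ.filter (fun t => J t = j)).card),
          ((univ.filter (fun t => J t = j)).card : ℝ) / (T : ℝ) *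
            (calErrLq T N q p o (univ.filter (fun t => J t = j)) /
              ((univ.filter (fun t => J t = j)).card : ℝ)) ∧
    ∀ (R : Fin M → ℝ) (ε : ℝ), (∀ j, 0 ≤ R j) → 0 ≤ ε →
      (∀ j : Fin M, 0 < (univ.filter (fun t => J t = j)).card →
        calErrLq T N q p o (univ.filter (fun t => J t = j)) /
          ((univ.filter (fun t => J t = j)).card : ℝ) ≤ R j + ε) →
      (calErrLq T N q p o univ) / (T : ℝ)
        ≤ (∑ j ∈ univ.filter
              (fun j : Fin M => 0 < (univ.filter (fun t => J t = j)).card),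
            ((univ.filter (fun t => J t = j)).card : ℝ) / (T : ℝ) * R j) + ε :=
  calErrLq_le_weighted_group_errors_general T N M q hq p o J
end

section
/- If ℓ : {0,1} × [0,1] → ℝ is a proper loss bounded by B, then for every pair of indices i, j ∈ {0,…,N}, the gain from retrospectively switching all plays of i/N to j/N satisfies Σ_{t=1}^T 𝟙{p_t = i/N} · (ℓ(o_t, i/N) − ℓ(o_t, j/N)) ≤ 2B · |Σ_{t : p_t = i/N} (o_t − i/N)|. -/
open Finset
open scoped Classical

/-- A loss `ℓ(y, q)` on binary outcomes `y ∈ {0,1}` and predictions `q ∈ [0,1]` is proper if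
`p·ℓ(1,p) + (1−p)·ℓ(0,p) ≤ p·ℓ(1,q) + (1−p)·ℓ(0,q)` for all `p, q ∈ [0,1]`. -/
def IsProperLoss (ℓ : ℝ → ℝ → ℝ) : Prop :=
  ∀ p ∈ Set.Icc (0 : ℝ) 1, ∀ q ∈ Set.Icc (0 : ℝ) 1,
    p * ℓ 1 p + (1 - p) * ℓ 0 p ≤ p * ℓ 1 q + (1 - p) * ℓ 0 q

/-- A loss is bounded by `B` if `0 ≤ ℓ(y,q) ≤ B` for all `y ∈ {0,1}` and `q ∈ [0,1]`. -/
def IsBoundedLoss (ℓ : ℝ → ℝ → ℝ) (B : ℝ) : Prop :=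
  ∀ y ∈ ({0, 1} : Set ℝ), ∀ q ∈ Set.Icc (0 : ℝ) 1, 0 ≤ ℓ y q ∧ ℓ y q ≤ B

/-- per-pair bound in the proof of the paper's Lemma 2:
`R^int_{T,ij} ≤ 2B · |Σ_{t : p_t = i/N} (o_t − i/N)|`. -/
theorem per_pair_internal_regret_bound
    (T N : ℕ) (hT : 1 ≤ T) (hN : 1 ≤ N)
    (p o : Fin T → ℝ)
    (hp : ∀ t, ∃ i : Fin (N + 1), p t = (i : ℝ) / N)
    (ho : ∀ t, o t = 0 ∨ o t = 1)
    (ℓ : ℝ → ℝ → ℝ) (B : ℝ) (hB : 0 < B)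
    (hproper : IsProperLoss ℓ) (hbounded : IsBoundedLoss ℓ B) :
    ∀ i ∈ Finset.range (N + 1), ∀ j ∈ Finset.range (N + 1),
      ∑ t ∈ univ.filter (fun t => p t = (i : ℝ) / N),
          (ℓ (o t) ((i : ℝ) / N) - ℓ (o t) ((j : ℝ) / N))
        ≤ 2 * B * |∑ t ∈ univ.filter (fun t => p t = (i : ℝ) / N), (o t - (i : ℝ) / N)| := by
  intro i hi j hj
  have hNpos : (0:ℝ) < N := by exact_mod_cast hN
  simp only [Finset.mem_range, Nat.lt_succ_iff] at hi hj
  set P : ℝ := (i:ℝ)/N with hPdef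
  set Q : ℝ := (j:ℝ)/N with hQdef
  have hP : P ∈ Set.Icc (0:ℝ) 1 :=
    ⟨by positivity, by rw [hPdef, div_le_one hNpos]; exact_mod_cast hi⟩
  have hQ : Q ∈ Set.Icc (0:ℝ) 1 :=
    ⟨by positivity, by rw [hQdef, div_le_one hNpos]; exact_mod_cast hj⟩
  set S := univ.filter (fun t => p t = P) with hS
  set a := ℓ 1 P - ℓ 1 Q with ha
  set b := ℓ 0 P - ℓ 0 Q with hb
  have key : ∀ t ∈ S, ℓ (o t) P - ℓ (o t) Q = (o t) * a + (1 - o t) * b := by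
    intro t _; rcases ho t with h | h <;> rw [h, ha, hb] <;> ring
  rw [Finset.sum_congr rfl key]
  set A := ∑ t ∈ S, o t with hA
  set C := (S.card : ℝ) with hC
  have hsum : ∑ t ∈ S, ((o t) * a + (1 - o t) * b) = A * a + (C - A) * b := by
    rw [Finset.sum_add_distrib, ← Finset.sum_mul, ← Finset.sum_mul,
      Finset.sum_sub_distrib, Finset.sum_const, nsmul_eq_mul, mul_one]
  rw [hsum]
  have hD : ∑ t ∈ S, (o t - P) = A - C * P := by
    rw [Finset.sum_sub_distrib, Finset.sum_const, nsmul_eq_mul]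
  rw [hD]
  set D := A - C * P with hDdef
  have hdecomp : A * a + (C - A) * b = C * (P * a + (1 - P) * b) + D * (a - b) := by
    rw [hDdef]; ring
  rw [hdecomp]
  have hprop : P * a + (1 - P) * b ≤ 0 := by
    have := hproper P hP Q hQ
    rw [ha, hb]; nlinarith [this]
  have hCnn : 0 ≤ C := by rw [hC]; positivity
  have h1 : C * (P * a + (1 - P) * b) ≤ 0 := mul_nonpos_of_nonneg_of_nonpos hCnn hprop
  have h0mem : (0:ℝ) ∈ ({0, 1} : Set ℝ) := by left; rfl
  have h1mem : (1:ℝ) ∈ ({0, 1} : Set ℝ) := by right; rfl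
  have b1P := hbounded 1 h1mem P hP
  have b1Q := hbounded 1 h1mem Q hQ
  have b0P := hbounded 0 h0mem P hP
  have b0Q := hbounded 0 h0mem Q hQ
  have hab : |a - b| ≤ 2 * B := by
    rw [abs_le, ha, hb]; constructor <;> nlinarith
  have h2 : D * (a - b) ≤ |D| * (2 * B) :=
    le_trans (le_abs_self _) (by rw [abs_mul]; exact mul_le_mul_of_nonneg_left hab (abs_nonneg _))
  calc C * (P * a + (1 - P) * b) + D * (a - b) ≤ 0 + |D| * (2 * B) := add_le_add h1 h2
    _ = 2 * B * |D| := by ring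
end

section
/- If ℓ : {0,1} × [0,1] → ℝ is a proper loss bounded by B, then the prediction sequence has external regret relative to any fixed action bounded by 2B times the ℓ1 calibration error: for every q ∈ {0, 1/N, …, 1}, Σ_{t=1}^T (ℓ(o_t, p_t) − ℓ(o_t, q)) ≤ 2B · Σ_{i=0}^N |Σ_{t : p_t = i/N} (o_t − i/N)|. -/
open Finset
open scoped Classical

/-!
Switching from `p` to `q` changes the loss on outcome `y ∈ {0,1}` by
`y·a + (1−y)·b` with `a = ℓ(1,p) − ℓ(1,q)` and `b = ℓ(0,p) − ℓ(0,q)`. Over the rounds where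
`p` was predicted this adds up to `n·(p·a + (1−p)·b) + (Σ (o_t − p))·(a − b)`: the first term
is `≤ 0` by properness and `|a − b| ≤ 2B` by boundedness. Summing over the predicted values gives
the bound.
-/

lemma loss_sub_eq_of_binary (ℓ : ℝ → ℝ → ℝ) (p q : ℝ) {y : ℝ} (hy : y = 0 ∨ y = 1) :
    ℓ y p - ℓ y q = p * (ℓ 1 p - ℓ 1 q) + (1 - p) * (ℓ 0 p - ℓ 0 q)
      + (y - p) * ((ℓ 1 p - ℓ 1 q) - (ℓ 0 p - ℓ 0 q)) := by
  rcases hy with rfl | rfl <;> ring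

section Loss

variable {ℓ : ℝ → ℝ → ℝ} {B p q : ℝ}

lemma IsProperLoss.expected_sub_nonpos (hℓ : IsProperLoss ℓ)
    (hp : p ∈ Set.Icc (0 : ℝ) 1) (hq : q ∈ Set.Icc (0 : ℝ) 1) :
    p * (ℓ 1 p - ℓ 1 q) + (1 - p) * (ℓ 0 p - ℓ 0 q) ≤ 0 := by
  linarith [hℓ p hp q hq]

lemma IsBoundedLoss.abs_sub_sub_le (hℓ : IsBoundedLoss ℓ B)
    (hp : p ∈ Set.Icc (0 : ℝ) 1) (hq : q ∈ Set.Icc (0 : ℝ) 1) :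
    |(ℓ 1 p - ℓ 1 q) - (ℓ 0 p - ℓ 0 q)| ≤ 2 * B := by
  obtain ⟨h1p, h1p'⟩ := hℓ 1 (by simp) p hp
  obtain ⟨h1q, h1q'⟩ := hℓ 1 (by simp) q hq
  obtain ⟨h0p, h0p'⟩ := hℓ 0 (by simp) p hp
  obtain ⟨h0q, h0q'⟩ := hℓ 0 (by simp) q hq
  rw [abs_le]
  constructor <;> linarith

lemma sum_loss_sub_le_of_isProperLoss {ι : Type*} (hproper : IsProperLoss ℓ)
    (hbounded : IsBoundedLoss ℓ B) (s : Finset ι) (o : ι → ℝ)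
    (ho : ∀ t ∈ s, o t = 0 ∨ o t = 1) (hp : p ∈ Set.Icc (0 : ℝ) 1)
    (hq : q ∈ Set.Icc (0 : ℝ) 1) :
    ∑ t ∈ s, (ℓ (o t) p - ℓ (o t) q) ≤ 2 * B * |∑ t ∈ s, (o t - p)| := by
  set a := ℓ 1 p - ℓ 1 q
  set b := ℓ 0 p - ℓ 0 q
  calc ∑ t ∈ s, (ℓ (o t) p - ℓ (o t) q)
      = #s * (p * a + (1 - p) * b) + (∑ t ∈ s, (o t - p)) * (a - b) := by
        rw [sum_congr rfl fun t ht => loss_sub_eq_of_binary ℓ p q (ho t ht), sum_add_distrib,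
          sum_const, nsmul_eq_mul, sum_mul]
    _ ≤ 0 + |∑ t ∈ s, (o t - p)| * (2 * B) :=
        add_le_add
          (mul_nonpos_of_nonneg_of_nonpos (Nat.cast_nonneg _) (hproper.expected_sub_nonpos hp hq))
          ((le_abs_self _).trans <| (abs_mul _ _).trans_le <|
            mul_le_mul_of_nonneg_left (hbounded.abs_sub_sub_le hp hq) (abs_nonneg _))
    _ = 2 * B * |∑ t ∈ s, (o t - p)| := by ring

lemma sum_loss_sub_le_calibration {ι : Type*} (hproper : IsProperLoss ℓ)
    (hbounded : IsBoundedLoss ℓ B) (s : Finset ι) (V : Finset ℝ)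
    (hV : ∀ v ∈ V, v ∈ Set.Icc (0 : ℝ) 1) (pred o : ι → ℝ) (hpred : ∀ t ∈ s, pred t ∈ V)
    (ho : ∀ t ∈ s, o t = 0 ∨ o t = 1) (hq : q ∈ Set.Icc (0 : ℝ) 1) :
    ∑ t ∈ s, (ℓ (o t) (pred t) - ℓ (o t) q)
      ≤ 2 * B * ∑ v ∈ V, |∑ t ∈ s with pred t = v, (o t - v)| := by
  rw [← sum_fiberwise_of_maps_to hpred, mul_sum]
  refine sum_le_sum fun v hv => ?_
  calc ∑ t ∈ s with pred t = v, (ℓ (o t) (pred t) - ℓ (o t) q)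
      = ∑ t ∈ s with pred t = v, (ℓ (o t) v - ℓ (o t) q) :=
        sum_congr rfl fun t ht => by rw [(mem_filter.mp ht).2]
    _ ≤ 2 * B * |∑ t ∈ s with pred t = v, (o t - v)| :=
        sum_loss_sub_le_of_isProperLoss hproper hbounded _ o
          (fun t ht => ho t (mem_filter.mp ht).1) (hV v hv) hq

end Loss

lemma div_mem_Icc_of_le {i N : ℕ} (hi : i ≤ N) : (i : ℝ) / N ∈ Set.Icc (0 : ℝ) 1 :=
  ⟨by positivity, div_le_one_of_le₀ (by exact_mod_cast hi) (Nat.cast_nonneg N)⟩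

theorem external_regret_le_calibration_general
    (T N : ℕ)
    (p o : Fin T → ℝ)
    (hp : ∀ t, ∃ i : Fin (N + 1), p t = (i : ℝ) / N)
    (ho : ∀ t, o t = 0 ∨ o t = 1)
    (ℓ : ℝ → ℝ → ℝ) (B : ℝ) (hB : 0 < B)
    (hproper : IsProperLoss ℓ) (hbounded : IsBoundedLoss ℓ B) :
    ∀ k ∈ Finset.range (N + 1),
      ∑ t, (ℓ (o t) (p t) - ℓ (o t) ((k : ℝ) / N))
        ≤ 2 * B * ∑ i ∈ Finset.range (N + 1),
            |∑ t ∈ univ.filter (fun t => p t = (i : ℝ) / N), (o t - (i : ℝ) / N)| := by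
  intro k hk
  set grid := (range (N + 1)).image fun i : ℕ => (i : ℝ) / N
  have hgrid : ∀ v ∈ grid, v ∈ Set.Icc (0 : ℝ) 1 := by
    simp only [grid, mem_image, mem_range]
    rintro _ ⟨i, hi, rfl⟩
    exact div_mem_Icc_of_le (Nat.lt_succ_iff.mp hi)
  have hp_grid : ∀ t ∈ univ, p t ∈ grid := fun t _ => by
    obtain ⟨i, hi⟩ := hp t
    exact mem_image.mpr ⟨i, mem_range.mpr i.isLt, hi.symm⟩
  calc ∑ t, (ℓ (o t) (p t) - ℓ (o t) ((k : ℝ) / N))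
      ≤ 2 * B * ∑ v ∈ grid, |∑ t with p t = v, (o t - v)| :=
        sum_loss_sub_le_calibration hproper hbounded univ grid hgrid p o hp_grid
          (fun t _ => ho t) (div_mem_Icc_of_le (Nat.lt_succ_iff.mp (mem_range.mp hk)))
    _ ≤ _ := by
        gcongr
        exact sum_image_le_of_nonneg fun _ _ => abs_nonneg _

/-- consequence of the paper's Lemma 2: for a bounded proper loss, the
external regret relative to any fixed action `q = k/N` is bounded by `2B` times the
ℓ1 calibration error. -/
theorem external_regret_le_calibration
    (T N : ℕ) (hT : 1 ≤ T) (hN : 1 ≤ N)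
    (p o : Fin T → ℝ)
    (hp : ∀ t, ∃ i : Fin (N + 1), p t = (i : ℝ) / N)
    (ho : ∀ t, o t = 0 ∨ o t = 1)
    (ℓ : ℝ → ℝ → ℝ) (B : ℝ) (hB : 0 < B)
    (hproper : IsProperLoss ℓ) (hbounded : IsBoundedLoss ℓ B) :
    ∀ k ∈ Finset.range (N + 1),
      ∑ t, (ℓ (o t) (p t) - ℓ (o t) ((k : ℝ) / N))
        ≤ 2 * B * ∑ i ∈ Finset.range (N + 1),
            |∑ t ∈ univ.filter (fun t => p t = (i : ℝ) / N), (o t - (i : ℝ) / N)| :=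
  external_regret_le_calibration_general T N p o hp ho ℓ B hB hproper hbounded
end

section
/- Let (μ_t)_{t≥1} be Borel probability measures on ℝ, (y_t)_{t≥1} real outcomes, and v : ℝ → ℝ nonnegative, monotonically nondecreasing, Borel measurable, and μ_t-integrable for every t; set v̂_t = ∫ v dμ_t. Fix r > 1, and suppose the forecasts are quantile calibrated in the sense that for every s ∈ (0,1), limsup_{T→∞} (1/T) Σ_{t=1}^T 𝟙{μ_t((−∞, y_t]) > 1 − s} ≤ s. Then the realized value exceeds r times the predicted value with asymptotic frequency at most 1/r: limsup_{T→∞} (1/T) Σ_{t=1}^T 𝟙{v(y_t) > r · v̂_t} ≤ 1/r. -/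
open MeasureTheory Filter
open scoped Classical

/-- paper's Theorem 4, generalized Markov inequality, nondecreasing case:
under quantile-calibrated forecasts `μ_t` and a nonnegative nondecreasing integrable value
function `v`, the realized value `v(y_t)` exceeds `r` times the predicted expected value
`v̂_t = ∫ v dμ_t` with asymptotic frequency at most `1/r`. -/
theorem generalized_markov_monotone
    (μ : ℕ → Measure ℝ) [∀ t, IsProbabilityMeasure (μ t)]
    (y : ℕ → ℝ) (v : ℝ → ℝ)
    (hv0 : ∀ z, 0 ≤ v z) (hvmono : Monotone v) (hvmeas : Measurable v)
    (hvint : ∀ t, Integrable v (μ t))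
    (r : ℝ) (hr : 1 < r)
    (hcal : ∀ s ∈ Set.Ioo (0 : ℝ) 1,
      limsup (fun T : ℕ => (1 / (T : ℝ)) * ∑ t ∈ Finset.range T,
          (if ENNReal.ofReal (1 - s) < (μ t) (Set.Iic (y t)) then (1 : ℝ) else 0))
        atTop ≤ s) :
    limsup (fun T : ℕ => (1 / (T : ℝ)) * ∑ t ∈ Finset.range T,
        (if r * (∫ z, v z ∂(μ t)) < v (y t) then (1 : ℝ) else 0)) atTop ≤ 1 / r := by
  have hr0 : (0 : ℝ) < r := lt_trans one_pos hr
  have hs : (1 / r : ℝ) ∈ Set.Ioo (0 : ℝ) 1 := by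
    constructor
    · positivity
    · rw [div_lt_one hr0]; exact hr
  -- pointwise implication
  have key : ∀ t : ℕ, r * (∫ z, v z ∂(μ t)) < v (y t) →
      ENNReal.ofReal (1 - 1 / r) < (μ t) (Set.Iic (y t)) := by
    intro t h
    set I := ∫ z, v z ∂(μ t) with hI
    have hInn : 0 ≤ I := integral_nonneg hv0
    have hvy : 0 < v (y t) := lt_of_le_of_lt (by positivity) h
    have hmarkov : v (y t) * ((μ t) {z | v (y t) ≤ v z}).toReal ≤ I :=
      mul_meas_ge_le_integral_of_nonneg (ae_of_all _ hv0) (hvint t) _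
    have hsub : Set.Ioi (y t) ⊆ {z | v (y t) ≤ v z} := fun z hz => hvmono (le_of_lt hz)
    have hIoi : ((μ t) (Set.Ioi (y t))).toReal ≤ ((μ t) {z | v (y t) ≤ v z}).toReal := by
      apply ENNReal.toReal_mono (measure_ne_top _ _) (measure_mono hsub)
    have h1 : v (y t) * ((μ t) (Set.Ioi (y t))).toReal ≤ I := by
      nlinarith [hmarkov, hIoi, hvy.le]
    have h2 : ((μ t) (Set.Ioi (y t))).toReal < 1 / r := by
      rw [lt_div_iff₀ hr0]
      nlinarith
    have hcompl : (μ t) (Set.Iic (y t)) = 1 - (μ t) (Set.Ioi (y t)) := by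
      rw [← Set.compl_Ioi, measure_compl measurableSet_Ioi (measure_ne_top _ _),
        measure_univ]
    have hfin : (μ t) (Set.Iic (y t)) ≠ ⊤ := measure_ne_top _ _
    have htoReal : 1 - 1 / r < ((μ t) (Set.Iic (y t))).toReal := by
      rw [hcompl, ENNReal.toReal_sub_of_le (prob_le_one) (by simp)]
      simp only [ENNReal.toReal_one]
      linarith
    calc ENNReal.ofReal (1 - 1 / r) < ENNReal.ofReal (((μ t) (Set.Iic (y t))).toReal) :=
          ENNReal.ofReal_lt_ofReal_iff_of_nonneg (by nlinarith [hs.2]) |>.mpr htoReal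
      _ = (μ t) (Set.Iic (y t)) := ENNReal.ofReal_toReal hfin
  -- compare the two sequences
  have hle : ∀ T : ℕ,
      (1 / (T : ℝ)) * ∑ t ∈ Finset.range T,
        (if r * (∫ z, v z ∂(μ t)) < v (y t) then (1 : ℝ) else 0) ≤
      (1 / (T : ℝ)) * ∑ t ∈ Finset.range T,
        (if ENNReal.ofReal (1 - 1 / r) < (μ t) (Set.Iic (y t)) then (1 : ℝ) else 0) := by
    intro T
    apply mul_le_mul_of_nonneg_left _ (by positivity)
    apply Finset.sum_le_sum
    intro t _
    by_cases h : r * (∫ z, v z ∂(μ t)) < v (y t)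
    · rw [if_pos h, if_pos (key t h)]
    · rw [if_neg h]
      split <;> norm_num
  have hboundg : ∀ T : ℕ,
      (1 / (T : ℝ)) * ∑ t ∈ Finset.range T,
        (if ENNReal.ofReal (1 - 1 / r) < (μ t) (Set.Iic (y t)) then (1 : ℝ) else 0) ≤ 1 := by
    intro T
    rcases Nat.eq_zero_or_pos T with hT | hT
    · simp [hT]
    · rw [one_div, inv_mul_le_iff₀ (by positivity), mul_one]
      calc (∑ t ∈ Finset.range T,
            (if ENNReal.ofReal (1 - 1 / r) < (μ t) (Set.Iic (y t)) then (1 : ℝ) else 0))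
          ≤ ∑ t ∈ Finset.range T, (1 : ℝ) := by
            apply Finset.sum_le_sum; intro t _; split <;> norm_num
        _ = T := by simp
  have hnonnegf : ∀ T : ℕ, (0 : ℝ) ≤
      (1 / (T : ℝ)) * ∑ t ∈ Finset.range T,
        (if r * (∫ z, v z ∂(μ t)) < v (y t) then (1 : ℝ) else 0) := by
    intro T
    apply mul_nonneg (by positivity)
    apply Finset.sum_nonneg; intro t _; split <;> norm_num
  refine le_trans (limsup_le_limsup (Eventually.of_forall hle) ?_ ?_) (hcal _ hs)
  · exact isCoboundedUnder_le_of_le atTop hnonnegf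
  · exact isBoundedUnder_of_eventually_le (Eventually.of_forall hboundg)
end

section
/- Let (μ_t)_{t≥1} be Borel probability measures on ℝ, (y_t)_{t≥1} real outcomes, and v : ℝ → ℝ nonnegative, monotonically nonincreasing, Borel measurable, and μ_t-integrable for every t; set v̂_t = ∫ v dμ_t. Fix r > 1, and suppose the forecasts are quantile calibrated in the sense that for every s ∈ (0,1), limsup_{T→∞} (1/T) Σ_{t=1}^T 𝟙{μ_t((−∞, y_t]) < s} ≤ s. Then limsup_{T→∞} (1/T) Σ_{t=1}^T 𝟙{v(y_t) > r · v̂_t} ≤ 1/r. -/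
open MeasureTheory Filter
open scoped Classical

/-- paper's Theorem 4, generalized Markov inequality, nonincreasing case:
under quantile-calibrated forecasts `μ_t` and a nonnegative nonincreasing integrable value
function `v`, the realized value `v(y_t)` exceeds `r` times the predicted expected value
`v̂_t = ∫ v dμ_t` with asymptotic frequency at most `1/r`. -/
theorem generalized_markov_antitone
    (μ : ℕ → Measure ℝ) [∀ t, IsProbabilityMeasure (μ t)]
    (y : ℕ → ℝ) (v : ℝ → ℝ)
    (hv0 : ∀ z, 0 ≤ v z) (hvanti : Antitone v) (hvmeas : Measurable v)
    (hvint : ∀ t, Integrable v (μ t))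
    (r : ℝ) (hr : 1 < r)
    (hcal : ∀ s ∈ Set.Ioo (0 : ℝ) 1,
      limsup (fun T : ℕ => (1 / (T : ℝ)) * ∑ t ∈ Finset.range T,
          (if (μ t) (Set.Iic (y t)) < ENNReal.ofReal s then (1 : ℝ) else 0))
        atTop ≤ s) :
    limsup (fun T : ℕ => (1 / (T : ℝ)) * ∑ t ∈ Finset.range T,
        (if r * (∫ z, v z ∂(μ t)) < v (y t) then (1 : ℝ) else 0)) atTop ≤ 1 / r := by
  have hr0 : (0 : ℝ) < r := lt_trans one_pos hr
  -- pointwise: the Markov event implies the quantile event at level 1/r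
  have key : ∀ t, (if r * (∫ z, v z ∂(μ t)) < v (y t) then (1 : ℝ) else 0) ≤
      (if (μ t) (Set.Iic (y t)) < ENNReal.ofReal (1 / r) then (1 : ℝ) else 0) := by
    intro t
    by_cases h : r * (∫ z, v z ∂(μ t)) < v (y t)
    · have hint0 : 0 ≤ ∫ z, v z ∂(μ t) := integral_nonneg hv0
      have hvy : 0 < v (y t) := lt_of_le_of_lt (by positivity) h
      -- Markov
      have hmar := mul_meas_ge_le_integral_of_nonneg (μ := μ t)
        (ae_of_all _ hv0) (hvint t) (v (y t))
      have hsub : Set.Iic (y t) ⊆ {x | v (y t) ≤ v x} := fun x hx => hvanti hx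
      have hmono : (μ t) (Set.Iic (y t)) ≤ (μ t) {x | v (y t) ≤ v x} :=
        measure_mono hsub
      have hne : (μ t) (Set.Iic (y t)) ≠ ⊤ := measure_ne_top _ _
      have hne2 : (μ t) {x | v (y t) ≤ v x} ≠ ⊤ := measure_ne_top _ _
      have h1 : v (y t) * ((μ t) (Set.Iic (y t))).toReal ≤ ∫ z, v z ∂(μ t) := by
        refine le_trans ?_ hmar
        exact mul_le_mul_of_nonneg_left (ENNReal.toReal_mono hne2 hmono) hvy.le
      have h2 : v (y t) * ((μ t) (Set.Iic (y t))).toReal < v (y t) * (1 / r) := by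
        calc v (y t) * ((μ t) (Set.Iic (y t))).toReal ≤ ∫ z, v z ∂(μ t) := h1
          _ < v (y t) / r := by
              rw [lt_div_iff₀ hr0]; linarith [h]
          _ = v (y t) * (1 / r) := by ring
      have h3 : ((μ t) (Set.Iic (y t))).toReal < 1 / r :=
        lt_of_mul_lt_mul_left h2 hvy.le
      have h4 : (μ t) (Set.Iic (y t)) < ENNReal.ofReal (1 / r) := by
        rw [← ENNReal.ofReal_toReal hne]
        exact ENNReal.ofReal_lt_ofReal_iff (by positivity) |>.mpr h3
      rw [if_pos h, if_pos h4]
    · simp only [h, if_false]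
      split <;> norm_num
  -- compare the two averaged sequences
  have hle : ∀ T : ℕ, (1 / (T : ℝ)) * ∑ t ∈ Finset.range T,
      (if r * (∫ z, v z ∂(μ t)) < v (y t) then (1 : ℝ) else 0) ≤
      (1 / (T : ℝ)) * ∑ t ∈ Finset.range T,
      (if (μ t) (Set.Iic (y t)) < ENNReal.ofReal (1 / r) then (1 : ℝ) else 0) := by
    intro T
    refine mul_le_mul_of_nonneg_left (Finset.sum_le_sum fun t _ => key t) (by positivity)
  have hbddg : IsBoundedUnder (· ≤ ·) atTop (fun T : ℕ => (1 / (T : ℝ)) *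
      ∑ t ∈ Finset.range T,
      (if (μ t) (Set.Iic (y t)) < ENNReal.ofReal (1 / r) then (1 : ℝ) else 0)) := by
    refine isBoundedUnder_of ⟨1, fun T => ?_⟩
    by_cases hT : T = 0
    · simp [hT]
    · have hTpos : (0 : ℝ) < T := by positivity
      rw [one_div, inv_mul_le_iff₀ hTpos, mul_one]
      calc (∑ t ∈ Finset.range T,
          (if (μ t) (Set.Iic (y t)) < ENNReal.ofReal (1 / r) then (1 : ℝ) else 0))
          ≤ ∑ t ∈ Finset.range T, (1 : ℝ) := by
            gcongr with t ht
            split <;> norm_num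
        _ = T := by simp
  have hcob : IsCoboundedUnder (· ≤ ·) atTop (fun T : ℕ => (1 / (T : ℝ)) *
      ∑ t ∈ Finset.range T,
      (if r * (∫ z, v z ∂(μ t)) < v (y t) then (1 : ℝ) else 0)) := by
    refine IsBoundedUnder.isCoboundedUnder_le (isBoundedUnder_of ⟨0, fun T => ?_⟩)
    have : (0 : ℝ) ≤ (1 / (T : ℝ)) * ∑ t ∈ Finset.range T,
        (if r * (∫ z, v z ∂(μ t)) < v (y t) then (1 : ℝ) else 0) := by
      apply mul_nonneg (by positivity)
      apply Finset.sum_nonneg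
      intro t _; split <;> norm_num
    simpa using this
  calc limsup (fun T : ℕ => (1 / (T : ℝ)) * ∑ t ∈ Finset.range T,
        (if r * (∫ z, v z ∂(μ t)) < v (y t) then (1 : ℝ) else 0)) atTop
      ≤ limsup (fun T : ℕ => (1 / (T : ℝ)) * ∑ t ∈ Finset.range T,
        (if (μ t) (Set.Iic (y t)) < ENNReal.ofReal (1 / r) then (1 : ℝ) else 0)) atTop :=
        limsup_le_limsup (Filter.Eventually.of_forall hle) hcob hbddg
    _ ≤ 1 / r := hcal (1 / r) ⟨by positivity, by rw [div_lt_one hr0]; exact hr⟩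
end

section
/- Let (P, dist) be a metric space of forecasts, Y a set of outcomes, and ℓ : Y × P → ℝ a loss. Fix B > 0 and ε > 0 and assume that ℓ(y, p) ≤ ℓ(y, p') + B·ε for all y ∈ Y and all p, p' ∈ P with dist(p, p') ≤ ε. Fix an integer T ≥ 1, sequences y_t ∈ Y, F_t ∈ P, G_t ∈ P for t = 1,…,T, an integer M ≥ 1, a grouping map J : {1,…,T} → {1,…,M}, and representatives q_1, …, q_M ∈ P such that dist(F_t, q_{J(t)}) ≤ ε for every t. Suppose that for each j ∈ {1,…,M} the per-group regret satisfies Σ_{t : J(t) = j} (ℓ(y_t, G_t) − ℓ(y_t, q_j)) ≤ ρ_j. Then the total regret of the recalibrated forecasts relative to the baseline satisfies Σ_{t=1}^T (ℓ(y_t, G_t) − ℓ(y_t, F_t)) ≤ Σ_{j=1}^M ρ_j + B·ε·T. -/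
open Finset

/-- aggregation step of the appendix lemma "recalibration preserves
accuracy": per-cell external-regret bounds `ρ_j` against the representatives `q_j`,
plus an ε-Lipschitz-type condition on the loss, yield a total regret bound of the
recalibrated forecasts `G_t` relative to the baseline forecasts `F_t`. -/
theorem recalibration_total_regret
    {P : Type*} [MetricSpace P] {Y : Type*}
    (ℓ : Y → P → ℝ) (B ε : ℝ) (hB : 0 < B) (hε : 0 < ε)
    (hlip : ∀ (y : Y) (p p' : P), dist p p' ≤ ε → ℓ y p ≤ ℓ y p' + B * ε)
    (T : ℕ) (hT : 1 ≤ T) (y : Fin T → Y) (F G : Fin T → P)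
    (M : ℕ) (hM : 1 ≤ M) (J : Fin T → Fin M) (q : Fin M → P)
    (hnear : ∀ t, dist (F t) (q (J t)) ≤ ε)
    (ρ : Fin M → ℝ)
    (hreg : ∀ j : Fin M,
      ∑ t ∈ univ.filter (fun t => J t = j), (ℓ (y t) (G t) - ℓ (y t) (q j)) ≤ ρ j) :
    ∑ t, (ℓ (y t) (G t) - ℓ (y t) (F t)) ≤ (∑ j, ρ j) + B * ε * T := by
  have key : ∀ t : Fin T, ℓ (y t) (G t) - ℓ (y t) (F t)
      ≤ (ℓ (y t) (G t) - ℓ (y t) (q (J t))) + B * ε := by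
    intro t
    have := hlip (y t) (q (J t)) (F t) (by rw [dist_comm]; exact hnear t)
    linarith
  calc ∑ t, (ℓ (y t) (G t) - ℓ (y t) (F t))
      ≤ ∑ t, ((ℓ (y t) (G t) - ℓ (y t) (q (J t))) + B * ε) :=
        Finset.sum_le_sum fun t _ => key t
    _ = (∑ t, (ℓ (y t) (G t) - ℓ (y t) (q (J t)))) + B * ε * T := by
        rw [Finset.sum_add_distrib, Finset.sum_const, Finset.card_univ, Fintype.card_fin,
          nsmul_eq_mul]; ring
    _ ≤ (∑ j, ρ j) + B * ε * T := by
        gcongr ?_ + _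
        rw [← Finset.sum_fiberwise (g := J) (f := fun t => ℓ (y t) (G t) - ℓ (y t) (q (J t)))]
        apply Finset.sum_le_sum
        intro j _
        calc ∑ t ∈ univ.filter (fun t => J t = j), (ℓ (y t) (G t) - ℓ (y t) (q (J t)))
            = ∑ t ∈ univ.filter (fun t => J t = j), (ℓ (y t) (G t) - ℓ (y t) (q j)) := by
              apply Finset.sum_congr rfl; intro t ht
              rw [(Finset.mem_filter.mp ht).2]
          _ ≤ ρ j := hreg j
end
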